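/- arXiv:1604.08856 — 3 statements merged into one kernel-verified Lean document; each statement's English description precedes it below -/
import Mathlib

section
/- For every natural number l and positive integer N, the limit as N → ∞ of the expression Σ_{q₂=0}^{min(l,N-1)} (1/N^{q₂+1})·C(N,q₂+1)·(1/q₂!)·((2l)!/(2^{l-q₂}(l-q₂)!))·(1/N^{l-q₂}) equals the Catalan-type number (2l)!/(l!(l+1)!). -/
/-!
Since `N.choose (q + 1) ~ N ^ (q + 1) / (q + 1)!`, the `q`-th summand is of order `N ^ (q - l)`.
Hence every summand with `q < l` vanishes in the limit, and the limit is the top summand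
`q = l`, which tends to `(2l)! / (l! (l + 1)!)`. For `N > l` the range of summation is
`0, …, l`, independent of `N`.
-/

open Filter Finset Topology

noncomputable def gueMomentTerm (l N q : ℕ) : ℝ :=
  (1 / (N : ℝ) ^ (q + 1)) * (N.choose (q + 1) : ℝ) * (1 / (q.factorial : ℝ)) *
    (((2 * l).factorial : ℝ) / (2 ^ (l - q) * ((l - q).factorial : ℝ))) *
    (1 / (N : ℝ) ^ (l - q))

lemma tendsto_choose_mul_inv_pow (k : ℕ) :
    Tendsto (fun N : ℕ => (N.choose k : ℝ) * ((N : ℝ)⁻¹) ^ k) atTop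
      (𝓝 ((k.factorial : ℝ)⁻¹)) := by
  have hmul : Tendsto (fun N : ℕ => (N : ℝ) * (N : ℝ)⁻¹) atTop (𝓝 1) :=
    tendsto_const_nhds.congr' <| by
      filter_upwards [eventually_ge_atTop 1] with N hN
      rw [mul_inv_cancel₀ (by positivity)]
  simpa [one_div] using ProbabilityTheory.tendsto_choose_mul_pow_atTop k hmul

lemma tendsto_gueMomentTerm {l q : ℕ} (hq : q ≤ l) :
    Tendsto (fun N => gueMomentTerm l N q) atTop
      (𝓝 (if q = l then
        ((2 * l).factorial : ℝ) / ((l.factorial : ℝ) * ((l + 1).factorial : ℝ)) else 0)) := by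
  set c : ℝ := 1 / (q.factorial : ℝ) *
    (((2 * l).factorial : ℝ) / (2 ^ (l - q) * ((l - q).factorial : ℝ)))
  have hterm : (fun N => gueMomentTerm l N q) =
      fun N : ℕ => (N.choose (q + 1) : ℝ) * ((N : ℝ)⁻¹) ^ (q + 1) * ((N : ℝ)⁻¹) ^ (l - q) * c := by
    funext N
    simp only [gueMomentTerm, c, one_div, inv_pow]
    ring
  have hinv : Tendsto (fun N : ℕ => (N : ℝ)⁻¹) atTop (𝓝 0) :=
    tendsto_inv_atTop_zero.comp tendsto_natCast_atTop_atTop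
  have hlim := ((tendsto_choose_mul_inv_pow (q + 1)).mul (hinv.pow (l - q))).mul_const c
  rw [hterm]
  convert hlim using 2
  split_ifs with hql
  · subst hql
    simp only [c, Nat.sub_self, pow_zero, Nat.factorial_zero, Nat.cast_one, mul_one]
    field_simp
  · rw [zero_pow (by omega), mul_zero, zero_mul]

theorem stmt_5 (l : ℕ) :
    Filter.Tendsto
      (fun N : ℕ =>
        ∑ q₂ ∈ Finset.range (min l (N - 1) + 1),
          (1 / (N : ℝ) ^ (q₂ + 1)) * (N.choose (q₂ + 1) : ℝ) * (1 / (q₂.factorial : ℝ)) *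
            (((2 * l).factorial : ℝ) / (2 ^ (l - q₂) * ((l - q₂).factorial : ℝ))) *
            (1 / (N : ℝ) ^ (l - q₂)))
      Filter.atTop
      (nhds (((2 * l).factorial : ℝ) / ((l.factorial : ℝ) * ((l + 1).factorial : ℝ)))) := by
  have hsum := tendsto_finsetSum (range (l + 1)) fun q hq =>
    tendsto_gueMomentTerm (l := l) (mem_range_succ_iff.mp hq)
  rw [Finset.sum_ite_eq' _ _ _, if_pos (self_mem_range_succ l)] at hsum
  refine hsum.congr' ?_
  filter_upwards [eventually_gt_atTop l] with N hN
  rw [min_eq_left (by omega)]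
  rfl
end

section
/- The sum over all genera of the rosette counts equals the double factorial: Σ_{g≥0} C_g(l) = (2l−1)!! for every positive integer l, where C_g(l) = ((2l)!/(l!·2^{2g})) Σ_{(k_q): Σ q k_q = g, Σ k_q = l−2g+1} Π_q 1/(k_q!(2q+1)^{k_q}) and (2l−1)!! = (2l)!/(2^l·l!). -/
open Finset

namespace RosetteAux

/-- weighted sum `Σ (2q+1) k_q` -/
def w (k : ℕ →₀ ℕ) : ℕ := k.sum fun q m => (2 * q + 1) * m

noncomputable def c (q m : ℕ) : ℚ :=
  (2 : ℚ) ^ m / ((m.factorial : ℚ) * (2 * (q : ℚ) + 1) ^ m)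

noncomputable def P (k : ℕ →₀ ℕ) : ℚ := ∏ q ∈ k.support, c q (k q)

lemma c_pos (q m : ℕ) : 0 < c q m := by
  unfold c
  positivity

lemma c_zero (q : ℕ) : c q 0 = 1 := by simp [c]

lemma w_def (k : ℕ →₀ ℕ) : w k = ∑ q ∈ k.support, (2 * q + 1) * k q := rfl

lemma apply_le {k : ℕ →₀ ℕ} {n : ℕ} (hk : w k = n) (q : ℕ) : (2 * q + 1) * k q ≤ n := by
  rcases eq_or_ne (k q) 0 with h | h
  · simp [h]
  · subst hk
    rw [w_def]
    exact Finset.single_le_sum (f := fun q => (2 * q + 1) * k q)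
      (fun i _ => Nat.zero_le _) (Finsupp.mem_support_iff.2 h)

lemma finite_S (n : ℕ) : {k : ℕ →₀ ℕ | w k = n}.Finite := by
  apply Set.Finite.of_finite_image
    (f := fun k => fun q : Fin n => (⟨min (k q) n, Nat.lt_succ_of_le (min_le_right _ _)⟩ : Fin (n+1)))
    (Set.toFinite _)
  intro k hk k' hk' hE
  simp only [Set.mem_setOf_eq] at hk hk'
  ext q
  have h1 : k q ≤ n := le_trans (Nat.le_mul_of_pos_left _ (by omega)) (apply_le hk q)
  have h1' : k' q ≤ n := le_trans (Nat.le_mul_of_pos_left _ (by omega)) (apply_le hk' q)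
  by_cases hq : q < n
  · have := congrFun hE ⟨q, hq⟩
    have := congrArg Fin.val this
    simpa [Nat.min_eq_left h1, Nat.min_eq_left h1'] using this
  · have h2 := apply_le hk q
    have h2' := apply_le hk' q
    have : k q = 0 := by nlinarith
    have : k' q = 0 := by nlinarith
    omega

noncomputable def S (n : ℕ) : Finset (ℕ →₀ ℕ) := (finite_S n).toFinset

lemma mem_S {n : ℕ} {k : ℕ →₀ ℕ} : k ∈ S n ↔ w k = n := by
  simp [S, Set.Finite.mem_toFinset]

noncomputable def f (n : ℕ) : ℚ := ∑ k ∈ S n, P k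

lemma w_zero_iff {k : ℕ →₀ ℕ} : w k = 0 ↔ k = 0 := by
  constructor
  · intro h
    ext q
    have h2 := Nat.le_zero.mp (apply_le h q)
    rcases Nat.mul_eq_zero.mp h2 with h3 | h3 <;> simp [h3] <;> omega
  · rintro rfl
    simp [w]

lemma f_zero : f 0 = 1 := by
  have : S 0 = {0} := by
    ext k
    simp [mem_S, w_zero_iff]
  simp [f, this, P]


lemma c_step (q m : ℕ) : ((m : ℚ) + 1) * (2 * (q:ℚ) + 1) * c q (m + 1) = 2 * c q m := by
  have h1 : ((m+1).factorial : ℚ) = ((m:ℚ)+1) * m.factorial := by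
    rw [Nat.factorial_succ]; push_cast; ring
  have h2 : (m.factorial : ℚ) ≠ 0 := Nat.cast_ne_zero.2 m.factorial_ne_zero
  have h3 : (2*(q:ℚ)+1) ≠ 0 := by positivity
  have h4 : ((m:ℚ)+1) ≠ 0 := by positivity
  unfold c
  rw [pow_succ, pow_succ, h1]
  field_simp

lemma P_step (k : ℕ →₀ ℕ) (q : ℕ) :
    ((k q : ℚ) + 1) * (2 * (q:ℚ) + 1) * P (k + Finsupp.single q 1) = 2 * P k := by
  set k1 := k + Finsupp.single q 1 with hk1
  have hk1q : k1 q = k q + 1 := by simp [hk1]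
  have hmem : q ∈ k1.support := by
    simp [Finsupp.mem_support_iff, hk1q]
  have herase : k1.erase q = k.erase q := by
    ext r
    rcases eq_or_ne r q with rfl | hr
    · simp [Finsupp.erase_apply]
    · simp [Finsupp.erase_apply, hr, hk1, Finsupp.single_apply, Ne.symm hr]
  have hsupp : k1.support.erase q = k.support.erase q := by
    rw [← Finsupp.support_erase, herase, Finsupp.support_erase]
  have hP1 : P k1 = c q (k q + 1) * ∏ r ∈ k.support.erase q, c r (k r) := by
    rw [P, ← Finset.mul_prod_erase _ _ hmem, hk1q, hsupp]
    congr 1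
    apply Finset.prod_congr rfl
    intro r hr
    have hr' : r ≠ q := (Finset.mem_erase.1 hr).1
    congr 1
    simp [hk1, Finsupp.single_apply, Ne.symm hr']
  have hP : P k = c q (k q) * ∏ r ∈ k.support.erase q, c r (k r) := by
    by_cases h : q ∈ k.support
    · rw [P, ← Finset.mul_prod_erase _ _ h]
    · have h0 : k q = 0 := Finsupp.notMem_support_iff.1 h
      rw [h0, c_zero, one_mul, P, Finset.erase_eq_of_notMem h]
  rw [hP1, hP, ← mul_assoc, ← mul_assoc]
  congr 1
  rw [c_step q (k q)]

def B (n : ℕ) : Finset ℕ := (range n).filter fun q => 2 * q + 1 ≤ n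

lemma mem_B {n q : ℕ} : q ∈ B n ↔ 2 * q + 1 ≤ n := by
  simp only [B, Finset.mem_filter, Finset.mem_range]
  omega

lemma w_add (k k' : ℕ →₀ ℕ) : w (k + k') = w k + w k' :=
  Finsupp.sum_add_index' (fun a => by simp) (fun a b1 b2 => by ring)

lemma w_single (q m : ℕ) : w (Finsupp.single q m) = (2 * q + 1) * m :=
  Finsupp.sum_single_index (by simp)

lemma recurrence (n : ℕ) :
    (n : ℚ) * f n = 2 * ∑ q ∈ B n, f (n - (2 * q + 1)) := by
  have LHS : (n : ℚ) * f n
      = ∑ p ∈ (S n).sigma (fun k => k.support),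
          (((2 * p.2 + 1) * p.1 p.2 : ℕ) : ℚ) * P p.1 := by
    rw [Finset.sum_sigma, f, Finset.mul_sum]
    apply Finset.sum_congr rfl
    intro k hk
    have hw : w k = n := mem_S.1 hk
    rw [← hw, w_def]
    push_cast
    rw [Finset.sum_mul]
  have RHS : 2 * ∑ q ∈ B n, f (n - (2 * q + 1))
      = ∑ p ∈ (B n).sigma (fun q => S (n - (2 * q + 1))), 2 * P p.2 := by
    rw [Finset.sum_sigma, Finset.mul_sum]
    apply Finset.sum_congr rfl
    intro q hq
    rw [f, Finset.mul_sum]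
  rw [LHS, RHS]
  apply Finset.sum_nbij' (i := fun p => ⟨p.2, p.1 - Finsupp.single p.2 1⟩)
    (j := fun p => ⟨p.2 + Finsupp.single p.1 1, p.1⟩)
  · rintro ⟨k, q⟩ hp
    rw [Finset.mem_sigma] at hp
    obtain ⟨hk, hq⟩ := hp
    have hkq : 1 ≤ k q := Nat.one_le_iff_ne_zero.2 (Finsupp.mem_support_iff.1 hq)
    have hdec : (k - Finsupp.single q 1) + Finsupp.single q 1 = k := by
      ext r
      rcases eq_or_ne r q with rfl | hr
      · simp [Finsupp.tsub_apply, Finsupp.single_apply]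
        omega
      · simp [Finsupp.tsub_apply, Finsupp.single_apply, Ne.symm hr]
    have hw : w k = n := mem_S.1 hk
    have hle : 2 * q + 1 ≤ n := by
      have := apply_le hw q
      nlinarith
    have hw2 : w (k - Finsupp.single q 1) + (2 * q + 1) = n := by
      have := w_add (k - Finsupp.single q 1) (Finsupp.single q 1)
      rw [hdec] at this
      rw [← hw, this, w_single]
      ring
    rw [Finset.mem_sigma]
    refine ⟨mem_B.2 hle, mem_S.2 ?_⟩
    dsimp only
    omega
  · rintro ⟨q, k'⟩ hp
    rw [Finset.mem_sigma] at hp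
    obtain ⟨hq, hk'⟩ := hp
    have hle : 2 * q + 1 ≤ n := mem_B.1 hq
    have hw' : w k' = n - (2 * q + 1) := mem_S.1 hk'
    rw [Finset.mem_sigma]
    constructor
    · apply mem_S.2
      dsimp only
      rw [w_add, hw', w_single]
      omega
    · simp [Finsupp.mem_support_iff, Finsupp.single_apply]
  · rintro ⟨k, q⟩ hp
    rw [Finset.mem_sigma] at hp
    obtain ⟨hk, hq⟩ := hp
    have hkq : 1 ≤ k q := Nat.one_le_iff_ne_zero.2 (Finsupp.mem_support_iff.1 hq)
    have hdec : (k - Finsupp.single q 1) + Finsupp.single q 1 = k := by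
      ext r
      rcases eq_or_ne r q with rfl | hr
      · simp [Finsupp.tsub_apply, Finsupp.single_apply]
        omega
      · simp [Finsupp.tsub_apply, Finsupp.single_apply, Ne.symm hr]
    show (⟨(k - Finsupp.single q 1) + Finsupp.single q 1, q⟩ : (_ : ℕ →₀ ℕ) × ℕ) = ⟨k, q⟩
    rw [hdec]
  · rintro ⟨q, k'⟩ hp
    have hdec : (k' + Finsupp.single q 1) - Finsupp.single q 1 = k' := by
      ext r
      rcases eq_or_ne r q with rfl | hr
      · simp [Finsupp.tsub_apply, Finsupp.single_apply]
      · simp [Finsupp.tsub_apply, Finsupp.single_apply, Ne.symm hr]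
    show (⟨q, (k' + Finsupp.single q 1) - Finsupp.single q 1⟩ : (_ : ℕ) × (ℕ →₀ ℕ)) = ⟨q, k'⟩
    rw [hdec]
  · rintro ⟨k, q⟩ hp
    rw [Finset.mem_sigma] at hp
    obtain ⟨hk, hq⟩ := hp
    have hkq : 1 ≤ k q := Nat.one_le_iff_ne_zero.2 (Finsupp.mem_support_iff.1 hq)
    have hdec : (k - Finsupp.single q 1) + Finsupp.single q 1 = k := by
      ext r
      rcases eq_or_ne r q with rfl | hr
      · simp [Finsupp.tsub_apply, Finsupp.single_apply]
        omega
      · simp [Finsupp.tsub_apply, Finsupp.single_apply, Ne.symm hr]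
    set k2 : ℕ →₀ ℕ := k - Finsupp.single q 1 with hk2
    have h' : k2 q + 1 = k q := by
      rw [hk2, Finsupp.tsub_apply]
      simp [Finsupp.single_apply]
      omega
    have hval : ((k2 q : ℕ) : ℚ) + 1 = ((k q : ℕ) : ℚ) := by
      exact_mod_cast congrArg (fun x : ℕ => (x : ℚ)) h'
    have hstep := P_step k2 q
    rw [hdec, hval] at hstep
    show (((2 * q + 1) * k q : ℕ) : ℚ) * P k = 2 * P k2
    rw [← hstep]
    push_cast
    ring


lemma B_eq (n : ℕ) : B n = Finset.range ((n + 1) / 2) := by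
  ext q
  rw [mem_B, Finset.mem_range]
  omega

lemma f_eq_two : ∀ n : ℕ, 1 ≤ n → f n = 2 := by
  intro n
  induction n using Nat.strong_induction_on with
  | _ n ih =>
    intro hn
    have hsum : ∑ q ∈ B n, f (n - (2 * q + 1)) = (n : ℚ) := by
      have hcong : ∀ q ∈ B n,
          f (n - (2 * q + 1)) = 2 - (if n = 2 * q + 1 then (1:ℚ) else 0) := by
        intro q hq
        rw [mem_B] at hq
        by_cases h : n = 2 * q + 1
        · rw [if_pos h]
          have h0 : n - (2 * q + 1) = 0 := by omega
          rw [h0, f_zero]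
          norm_num
        · rw [if_neg h]
          rw [ih _ (by omega) (by omega)]
          norm_num
      rw [Finset.sum_congr rfl hcong, Finset.sum_sub_distrib, Finset.sum_const, B_eq,
        Finset.card_range]
      have hite : ∑ q ∈ Finset.range ((n + 1) / 2), (if n = 2 * q + 1 then (1:ℚ) else 0)
          = if Odd n then 1 else 0 := by
        by_cases hodd : Odd n
        · obtain ⟨t, ht⟩ := hodd
          rw [if_pos ⟨t, ht⟩]
          have hc : ∀ q ∈ Finset.range ((n + 1) / 2),
              (if n = 2 * q + 1 then (1:ℚ) else 0) = if q = t then 1 else 0 := by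
            intro q _
            congr 1
            · simp only [eq_iff_iff]
              omega
          rw [Finset.sum_congr rfl hc, Finset.sum_ite_eq' _ t]
          rw [if_pos (by rw [Finset.mem_range]; omega)]
        · rw [if_neg hodd]
          apply Finset.sum_eq_zero
          intro q _
          rw [if_neg]
          intro h
          exact hodd ⟨q, by omega⟩
      rw [hite]
      rcases Nat.even_or_odd n with he | ho
      · rw [if_neg (by simpa using he)]
        obtain ⟨t, rfl⟩ := he
        have h2 : (t + t + 1) / 2 = t := by omega
        rw [h2]
        push_cast
        ring
      · rw [if_pos ho]
        obtain ⟨t, rfl⟩ := ho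
        have h2 : (2 * t + 1 + 1) / 2 = t + 1 := by omega
        rw [h2]
        push_cast
        ring
    have hrec := recurrence n
    rw [hsum] at hrec
    have hne : (n : ℚ) ≠ 0 := Nat.cast_ne_zero.2 (by omega)
    exact mul_left_cancel₀ hne (by rw [hrec]; ring)


def G (k : ℕ →₀ ℕ) : ℕ := k.sum fun q kq => q * kq

def Sm (k : ℕ →₀ ℕ) : ℕ := k.sum fun _ kq => kq

noncomputable def Qf (k : ℕ →₀ ℕ) : ℚ :=
  ∏ q ∈ k.support, (1 : ℚ) / (((k q).factorial : ℚ) * (2 * q + 1) ^ (k q))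

lemma w_eq (k : ℕ →₀ ℕ) : w k = 2 * G k + Sm k := by
  rw [w_def]
  have hG : G k = ∑ q ∈ k.support, q * k q := rfl
  have hS : Sm k = ∑ q ∈ k.support, k q := rfl
  rw [hG, hS, Finset.mul_sum, ← Finset.sum_add_distrib]
  apply Finset.sum_congr rfl
  intro q _
  ring

lemma P_eq (k : ℕ →₀ ℕ) : P k = 2 ^ (Sm k) * Qf k := by
  have hS : Sm k = ∑ q ∈ k.support, k q := rfl
  rw [P, Qf, hS, ← Finset.prod_pow_eq_pow_sum, ← Finset.prod_mul_distrib]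
  apply Finset.prod_congr rfl
  intro q _
  rw [c]
  rw [div_eq_mul_one_div]

end RosetteAux

/-- The rosette count `C_g(l)`. -/
noncomputable def rosetteC (g l : ℕ) : ℚ :=
  (((2 * l).factorial : ℚ) / ((l.factorial : ℚ) * 2 ^ (2 * g))) *
    ∑ᶠ k : ℕ →₀ ℕ,
      if k.sum (fun q kq => q * kq) = g ∧ k.sum (fun _ kq => kq) + 2 * g = l + 1 then
        ∏ q ∈ k.support, (1 : ℚ) / (((k q).factorial : ℚ) * (2 * q + 1) ^ (k q))
      else 0

namespace RosetteAux

lemma rosetteC_eq (g l : ℕ) :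
    rosetteC g l = (((2 * l).factorial : ℚ) / ((l.factorial : ℚ) * 2 ^ (2 * g))) *
      ∑ k ∈ S (l + 1), if G k = g ∧ Sm k + 2 * g = l + 1 then Qf k else 0 := by
  rw [rosetteC]
  congr 1
  have : (fun k : ℕ →₀ ℕ =>
      if k.sum (fun q kq => q * kq) = g ∧ k.sum (fun _ kq => kq) + 2 * g = l + 1 then
        ∏ q ∈ k.support, (1 : ℚ) / (((k q).factorial : ℚ) * (2 * q + 1) ^ (k q))
      else 0)
      = fun k => if G k = g ∧ Sm k + 2 * g = l + 1 then Qf k else 0 := rfl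
  rw [this]
  apply finsum_eq_sum_of_support_subset
  intro k hk
  simp only [Function.mem_support, ne_eq, ite_eq_right_iff, not_forall] at hk
  obtain ⟨⟨h1, h2⟩, _⟩ := hk
  simp only [Finset.coe_sort_coe, Finset.mem_coe]
  apply mem_S.2
  rw [w_eq]
  omega

lemma rosetteC_eq_zero {g l : ℕ} (hg : l + 1 ≤ g) : rosetteC g l = 0 := by
  rw [rosetteC_eq]
  have : ∀ k ∈ S (l + 1), (if G k = g ∧ Sm k + 2 * g = l + 1 then Qf k else 0) = 0 := by
    intro k _
    rw [if_neg]
    rintro ⟨h1, h2⟩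
    omega
  rw [Finset.sum_congr rfl this, Finset.sum_const, smul_zero, mul_zero]

end RosetteAux

theorem stmt_8 (l : ℕ) (hl : 1 ≤ l) :
    (∑ᶠ g : ℕ, rosetteC g l) = ((2 * l).factorial : ℚ) / (2 ^ l * (l.factorial : ℚ)) := by
  open RosetteAux in
  have hstep1 : (∑ᶠ g : ℕ, rosetteC g l) = ∑ g ∈ Finset.range (l + 1), rosetteC g l := by
    apply finsum_eq_sum_of_support_subset
    intro g hg
    simp only [Function.mem_support, ne_eq] at hg
    simp only [Finset.coe_sort_coe, Finset.mem_coe, Finset.mem_range]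
    by_contra hc
    exact hg (RosetteAux.rosetteC_eq_zero (by omega))
  rw [hstep1]
  have hstep2 : ∀ g, rosetteC g l = ∑ k ∈ RosetteAux.S (l + 1),
      if RosetteAux.G k = g ∧ RosetteAux.Sm k + 2 * g = l + 1 then
        (((2 * l).factorial : ℚ) / ((l.factorial : ℚ) * 2 ^ (2 * g))) * RosetteAux.Qf k
      else 0 := by
    intro g
    rw [RosetteAux.rosetteC_eq, Finset.mul_sum]
    apply Finset.sum_congr rfl
    intro k _
    rw [mul_ite, mul_zero]
  simp only [hstep2]
  rw [Finset.sum_comm]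
  have hstep3 : ∀ k ∈ RosetteAux.S (l + 1),
      (∑ g ∈ Finset.range (l + 1),
        if RosetteAux.G k = g ∧ RosetteAux.Sm k + 2 * g = l + 1 then
          (((2 * l).factorial : ℚ) / ((l.factorial : ℚ) * 2 ^ (2 * g))) * RosetteAux.Qf k
        else 0)
      = ((2 * l).factorial : ℚ) / ((l.factorial : ℚ) * 2 ^ (l + 1)) * RosetteAux.P k := by
    intro k hk
    have hw : RosetteAux.w k = l + 1 := RosetteAux.mem_S.1 hk
    have hweq := RosetteAux.w_eq k
    rw [Finset.sum_eq_single_of_mem (RosetteAux.G k)]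
    · rw [if_pos ⟨rfl, by omega⟩]
      have hpow : (2:ℚ) ^ (l + 1) = 2 ^ (2 * RosetteAux.G k) * 2 ^ (RosetteAux.Sm k) := by
        rw [← pow_add]
        congr 1
        omega
      rw [RosetteAux.P_eq, hpow]
      have h1 : (l.factorial : ℚ) ≠ 0 := Nat.cast_ne_zero.2 l.factorial_ne_zero
      have h2 : (2:ℚ) ^ (2 * RosetteAux.G k) ≠ 0 := by positivity
      have h3 : (2:ℚ) ^ (RosetteAux.Sm k) ≠ 0 := by positivity
      field_simp
    · rw [Finset.mem_range]
      omega
    · intro g _ hg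
      rw [if_neg]
      rintro ⟨h1, _⟩
      exact hg h1.symm
  rw [Finset.sum_congr rfl hstep3, ← Finset.mul_sum]
  have hf : ∑ k ∈ RosetteAux.S (l + 1), RosetteAux.P k = 2 := RosetteAux.f_eq_two (l + 1) (by omega)
  rw [hf]
  have h1 : (l.factorial : ℚ) ≠ 0 := Nat.cast_ne_zero.2 l.factorial_ne_zero
  have h2 : (2:ℚ) ^ (l + 1) ≠ 0 := by positivity
  have h3 : (2:ℚ) ^ l ≠ 0 := by positivity
  rw [pow_succ]
  field_simp
end

section
/- Let f(u,N) = e^{u/N} · Σ_{q=0}^{N-1} (1/N^{q+1})·C(N,q+1)·(2u)^q/q! − 1 for u ≥ 0 real and integer N ≥ 1. Then for real x with 0 < x < N, the Laplace-type integral ∫_0^∞ e^{-u/x} f(u,N) du converges and ∫_0^∞ e^{-u/x} f(u,N) du = (1/2)((1+x/N)/(1−x/N))^N − 1/2 − x. -/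
open MeasureTheory Real Set

lemma aux_int (q : ℕ) {b : ℝ} (hb : 0 < b) :
    IntegrableOn (fun u : ℝ => u ^ q * Real.exp (-b * u)) (Set.Ioi 0) ∧
    ∫ u in Set.Ioi (0:ℝ), u ^ q * Real.exp (-b * u) = q.factorial / b ^ (q + 1) := by
  constructor
  · have := integrableOn_rpow_mul_exp_neg_mul_rpow (s := (q:ℝ)) (p := 1) (b := b)
      (lt_of_lt_of_le (by norm_num) (Nat.cast_nonneg q)) zero_lt_one hb
    simpa [Real.rpow_one, Real.rpow_natCast] using this
  · have h := integral_rpow_mul_exp_neg_mul_Ioi (a := (q:ℝ) + 1) (r := b)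
      (by positivity) hb
    have h1 : ∀ u : ℝ, u ^ ((q:ℝ) + 1 - 1) * Real.exp (-(b * u))
        = u ^ q * Real.exp (-b * u) := by
      intro u
      rw [add_sub_cancel_right, Real.rpow_natCast, neg_mul]
    rw [show (∫ t in Ioi (0:ℝ), t ^ ((q:ℝ) + 1 - 1) * Real.exp (-(b * t)))
        = ∫ t in Ioi (0:ℝ), t ^ q * Real.exp (-b * t) from by
      exact integral_congr_ae (Filter.Eventually.of_forall fun u => h1 u)] at h
    rw [h]
    rw [show (q:ℝ) + 1 = ((q + 1 : ℕ) : ℝ) by push_cast; ring, Real.rpow_natCast,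
      Nat.cast_add, Nat.cast_one, Real.Gamma_nat_eq_factorial]
    field_simp
    rw [← mul_pow, one_div, inv_mul_cancel₀ hb.ne', one_pow]

theorem stmt_11 (N : ℕ) (hN : 1 ≤ N) (x : ℝ) (hx0 : 0 < x) (hxN : x < N)
    (f : ℝ → ℝ)
    (hf : ∀ u : ℝ, f u = Real.exp (u / N) *
        (∑ q ∈ Finset.range N,
          (1 / (N : ℝ) ^ (q + 1)) * (N.choose (q + 1) : ℝ) * (2 * u) ^ q / (q.factorial : ℝ)) - 1) :
    MeasureTheory.IntegrableOn (fun u => Real.exp (-u / x) * f u) (Set.Ioi 0)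
    ∧ (∫ u in Set.Ioi (0 : ℝ), Real.exp (-u / x) * f u)
        = (1 / 2) * ((1 + x / N) / (1 - x / N)) ^ N - 1 / 2 - x := by
  have hNpos : (0:ℝ) < N := lt_trans hx0 hxN
  have hNne : (N:ℝ) ≠ 0 := ne_of_gt hNpos
  have hxne : x ≠ 0 := ne_of_gt hx0
  set α : ℝ := 1 / x - 1 / N with hα
  have hαpos : 0 < α := by
    rw [hα]
    have : 1 / (N:ℝ) < 1 / x := by
      apply one_div_lt_one_div_of_lt hx0 hxN
    linarith
  have hαne : α ≠ 0 := ne_of_gt hαpos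
  have hNx : (0:ℝ) < (N:ℝ) - x := by linarith
  set c : ℕ → ℝ := fun q => (1 / (N:ℝ) ^ (q + 1)) * (N.choose (q + 1) : ℝ) * 2 ^ q / q.factorial
    with hc
  have hexp : ∀ u : ℝ, Real.exp (-u / x) * Real.exp (u / N) = Real.exp (-α * u) := by
    intro u
    rw [← Real.exp_add]
    congr 1
    rw [hα]; ring
  have key : (fun u : ℝ => Real.exp (-u / x) * f u)
      = fun u => (∑ q ∈ Finset.range N, c q * (u ^ q * Real.exp (-α * u)))
          - Real.exp (-(1 / x) * u) := by
    funext u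
    rw [hf, mul_sub, mul_one]
    simp only [Finset.mul_sum]
    congr 1
    · refine Finset.sum_congr rfl fun q _ => ?_
      rw [← hexp u, hc]
      have hq : (q.factorial : ℝ) ≠ 0 := Nat.cast_ne_zero.mpr q.factorial_ne_zero
      field_simp
      ring
    · congr 1; ring
  have hix : (0:ℝ) < 1 / x := by positivity
  have hIexp : IntegrableOn (fun u : ℝ => Real.exp (-(1 / x) * u)) (Set.Ioi 0) := by
    have := (aux_int 0 hix).1
    simpa using this
  have hIsum : IntegrableOn
      (fun u : ℝ => ∑ q ∈ Finset.range N, c q * (u ^ q * Real.exp (-α * u))) (Set.Ioi 0) := by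
    apply integrable_finset_sum
    intro q _
    exact ((aux_int q hαpos).1).const_mul (c q)
  constructor
  · rw [key]
    exact hIsum.sub hIexp
  · rw [key, integral_sub hIsum hIexp, integral_finset_sum _
      (fun q _ => ((aux_int q hαpos).1).const_mul (c q))]
    have hE : ∫ u in Set.Ioi (0:ℝ), Real.exp (-(1 / x) * u) = x := by
      have := (aux_int 0 hix).2
      simpa using this
    rw [hE]
    have hterm : ∀ q ∈ Finset.range N,
        ∫ u in Set.Ioi (0:ℝ), c q * (u ^ q * Real.exp (-α * u))
          = (N.choose (q + 1) : ℝ) * (2 * x / ((N:ℝ) - x)) ^ (q + 1) / 2 := by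
      intro q _
      rw [MeasureTheory.integral_const_mul, (aux_int q hαpos).2, hc]
      have hq : (q.factorial : ℝ) ≠ 0 := Nat.cast_ne_zero.mpr q.factorial_ne_zero
      have hNα : (N:ℝ) * α = ((N:ℝ) - x) / x := by
        rw [hα]; field_simp
      have hpow : (N:ℝ) ^ (q+1) * α ^ (q+1) = (((N:ℝ) - x) / x) ^ (q+1) := by
        rw [← mul_pow, hNα]
      have hne : (((N:ℝ) - x) / x) ≠ 0 := by positivity
      field_simp
      rw [show (N:ℝ) ^ (q+1) * (N.choose (q + 1) : ℝ) * α ^ (q+1) * (2 * x / ((N:ℝ) - x)) ^ (q + 1)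
          = (N.choose (q + 1) : ℝ) * (((N:ℝ) ^ (q+1) * α ^ (q+1)) * (2 * x / ((N:ℝ) - x)) ^ (q + 1)) by ring,
        hpow, ← mul_pow, show ((N:ℝ) - x) / x * (2 * x / ((N:ℝ) - x)) = 2 by
          rw [div_mul_div_comm, div_eq_iff (by positivity)]; ring]
      ring
    rw [Finset.sum_congr rfl hterm]
    have ht : ∀ k : ℕ, ((2 * x / ((N:ℝ) - x)) + 1) ^ N
        = ∑ k ∈ Finset.range (N + 1),
            (2 * x / ((N:ℝ) - x)) ^ k * (N.choose k : ℝ) := by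
      intro k
      rw [add_pow]
      exact Finset.sum_congr rfl fun k _ => by rw [one_pow, mul_one]
    have hsum : ∑ q ∈ Finset.range N,
        (N.choose (q + 1) : ℝ) * (2 * x / ((N:ℝ) - x)) ^ (q + 1) / 2
        = (1/2) * (((2 * x / ((N:ℝ) - x)) + 1) ^ N - 1) := by
      rw [ht 0, Finset.sum_range_succ' (fun k => (2 * x / ((N:ℝ) - x)) ^ k * (N.choose k : ℝ)) N]
      simp only [pow_zero, Nat.choose_zero_right, Nat.cast_one, one_mul, mul_one]
      rw [Finset.sum_congr rfl (fun q _ => by ring : ∀ q ∈ Finset.range N,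
        (N.choose (q + 1) : ℝ) * (2 * x / ((N:ℝ) - x)) ^ (q + 1) / 2
          = (2 * x / ((N:ℝ) - x)) ^ (q+1) * (N.choose (q + 1) : ℝ) * (1/2))]
      rw [← Finset.sum_mul]
      ring
    rw [hsum]
    have h1 : 1 - x / (N:ℝ) ≠ 0 := by
      have : x / (N:ℝ) < 1 := (div_lt_one hNpos).mpr hxN
      intro h; rw [sub_eq_zero] at h; linarith
    have hfrac : (2 * x / ((N:ℝ) - x)) + 1 = (1 + x / N) / (1 - x / N) := by
      rw [div_add' _ _ _ hNx.ne', eq_div_iff h1]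
      field_simp
      ring
    rw [hfrac]
    ring
end
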